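/- arXiv:1801.01353 — 3 statements merged into one kernel-verified Lean document; each statement's English description precedes it below -/
import Mathlib

section
/- Let E be a standard Borel measurable space and, for r ∈ [0,1] and a probability measure μ on E, let B(r, μ) = (1 − r)·δ_none + r·(μ ∘ Option.some⁻¹) on Option E. Let w_h ≥ 0 with Σ_h w_h = 1 (h ranging over a finite index set), r_h ∈ [0,1], and probability measures μ_h on E be given; set r̄ = Σ_h w_h r_h, assume 0 < r̄ < 1, and let m = r̄⁻¹ · Σ_h w_h r_h μ_h. Let F be a nonempty family of probability measures on E and suppose ν̂ ∈ F attains the infimum of ν ↦ D_KL(m ‖ ν) over F. Then for every s ∈ (0,1) and every ν ∈ F, D_KL(B(r̄, m) ‖ B(s, ν)) ≥ D_KL(B(r̄, m) ‖ B(r̄, ν̂)). That is, the Bernoulli approximation minimizing the KL divergence from the Bernoulli mixture has existence probability equal to the weighted average Σ_h w_h r_h of the mixture's existence probabilities, and existence-conditioned distribution equal to the KL projection of the normalized mixture m onto F. -/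
open MeasureTheory
open scoped ENNReal
open Classical

/-- Kullback–Leibler divergence between two measures, with values in `[0, ∞]`:
`∫ log(dp/dq) dp` if `p ≪ q`, and `+∞` otherwise. -/
noncomputable def klDiv {α : Type*} [MeasurableSpace α] (p q : Measure α) : ℝ≥0∞ :=
  if p ≪ q then ENNReal.ofReal (∫ x, Real.log (p.rnDeriv q x).toReal ∂p) else ⊤

/-- The σ-algebra on `Option α`: a set is measurable iff its preimage under `some` is. -/
instance {α : Type*} [m : MeasurableSpace α] : MeasurableSpace (Option α) := m.map Option.some

/-- The Bernoulli option measure `B(r, μ) = (1 − r)·δ_none + r·(μ ∘ some⁻¹)`, modeling a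
Bernoulli random finite set with existence probability `r` and state distribution `μ`. -/
noncomputable def bernoulliRFS {E : Type*} [MeasurableSpace E] (r : ℝ) (μ : Measure E) :
    Measure (Option E) :=
  ENNReal.ofReal (1 - r) • Measure.dirac (none : Option E) +
    ENNReal.ofReal r • μ.map Option.some

/-!
If `μ ≪ ν`, the density of `B(r, μ)` with respect to `B(s, ν)` is `(1 - r) / (1 - s)` at `none`
and `(r / s) · dμ/dν` on `some`, so that `D(B(r, μ) ‖ B(s, ν)) = d(r ‖ s) + r · D(μ ‖ ν)`, where
`d(r ‖ s)` is the KL divergence between the Bernoulli laws with parameters `r` and `s`. Since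
`d(r ‖ s) ≥ 0 = d(r ‖ r)`,
`D(B(r̄, m) ‖ B(s, ν)) ≥ r̄ · D(m ‖ ν) ≥ r̄ · D(m ‖ ν̂) = D(B(r̄, m) ‖ B(r̄, ν̂))`.
`klDiv` reads a non-integrable log-likelihood ratio as `0`; the ratio for `B(r, μ) ‖ B(s, ν)` is
integrable exactly when the one for `μ ‖ ν` is, so the chain survives this convention.
-/

lemma isProbabilityMeasure_inv_smul_sum {E H : Type*} [MeasurableSpace E] {t : Finset H}
    {c : H → ℝ} (hc : ∀ h, 0 ≤ c h) (hpos : 0 < ∑ h ∈ t, c h) (μ : H → Measure E)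
    [∀ h, IsProbabilityMeasure (μ h)] :
    IsProbabilityMeasure
      ((ENNReal.ofReal (∑ h ∈ t, c h))⁻¹ • ∑ h ∈ t, ENNReal.ofReal (c h) • μ h) := by
  constructor
  simp only [Measure.smul_apply, Measure.finsetSum_apply, measure_univ, smul_eq_mul, mul_one]
  rw [← ENNReal.ofReal_sum_of_nonneg fun h _ => hc h]
  exact ENNReal.inv_mul_cancel (by simpa using hpos) ENNReal.ofReal_ne_top

lemma withDensity_map {α β : Type*} [MeasurableSpace α] [MeasurableSpace β] {μ : Measure α}
    {f : α → β} (hf : Measurable f) {g : β → ℝ≥0∞} (hg : Measurable g) :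
    (μ.map f).withDensity g = (μ.withDensity (g ∘ f)).map f := by
  ext S hS
  rw [withDensity_apply _ hS, Measure.map_apply hf hS, withDensity_apply _ (hf hS),
    setLIntegral_map hS hg hf, Function.comp_def]

lemma integrable_dirac_of_measurable {α : Type*} [MeasurableSpace α] {φ : α → ℝ}
    (hφ : Measurable φ) (a : α) : Integrable φ (Measure.dirac a) :=
  (integrable_const (φ a)).congr (ae_eq_dirac' hφ).symm

noncomputable def binaryKL (r s : ℝ) : ℝ :=
  (1 - r) * Real.log ((1 - r) / (1 - s)) + r * Real.log (r / s)

lemma binaryKL_self (r : ℝ) : binaryKL r r = 0 := by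
  simp [binaryKL]

lemma binaryKL_nonneg {r s : ℝ} (hr0 : 0 < r) (hr1 : r < 1) (hs0 : 0 < s) (hs1 : s < 1) :
    0 ≤ binaryKL r s := by
  have hnone : s - r ≤ (1 - r) * Real.log ((1 - r) / (1 - s)) := by
    have h := Real.one_sub_inv_le_log_of_pos (div_pos (sub_pos.2 hr1) (sub_pos.2 hs1))
    rw [inv_div] at h
    calc s - r = (1 - r) * (1 - (1 - s) / (1 - r)) := by field_simp [(sub_pos.2 hr1).ne']; ring
      _ ≤ _ := mul_le_mul_of_nonneg_left h (sub_pos.2 hr1).le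
  have hsome : r - s ≤ r * Real.log (r / s) := by
    have h := Real.one_sub_inv_le_log_of_pos (div_pos hr0 hs0)
    rw [inv_div] at h
    calc r - s = r * (1 - s / r) := by field_simp [hr0.ne']
      _ ≤ _ := mul_le_mul_of_nonneg_left h hr0.le
  unfold binaryKL
  linarith

section OptionMeasurable

variable {E : Type*} [MeasurableSpace E]

lemma measurable_option_some : Measurable (Option.some : E → Option E) := fun _ hs => hs

lemma measurable_of_measurable_comp_some {β : Type*} [MeasurableSpace β] {f : Option E → β}
    (hf : Measurable (f ∘ Option.some)) : Measurable f := fun _ hs => hf hs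

lemma measurableSet_image_some {A : Set E} (hA : MeasurableSet A) :
    MeasurableSet (Option.some '' A) := by
  change MeasurableSet (Option.some ⁻¹' (Option.some '' A))
  rwa [Set.preimage_image_eq _ (Option.some_injective E)]

end OptionMeasurable

section Bernoulli

variable {E : Type*} [MeasurableSpace E] {μ ν : Measure E} {r s : ℝ}

instance [IsFiniteMeasure μ] : IsFiniteMeasure (bernoulliRFS r μ) := by
  change IsFiniteMeasure ((Real.toNNReal (1 - r)) • Measure.dirac none +
    (Real.toNNReal r) • μ.map Option.some)
  infer_instance

lemma bernoulliRFS_apply_image_some (r : ℝ) (μ : Measure E) {A : Set E} (hA : MeasurableSet A) :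
    bernoulliRFS r μ (Option.some '' A) = ENNReal.ofReal r * μ A := by
  have hS := measurableSet_image_some hA
  simp [bernoulliRFS, Measure.map_apply measurable_option_some hS, Measure.dirac_apply' _ hS,
    Set.preimage_image_eq _ (Option.some_injective E)]

lemma bernoulliRFS_absolutelyContinuous_iff (hr : 0 < r) (hs0 : 0 < s) (hs1 : s < 1) :
    bernoulliRFS r μ ≪ bernoulliRFS s ν ↔ μ ≪ ν := by
  refine ⟨fun h => Measure.AbsolutelyContinuous.mk fun A hA hνA => ?_, fun h => ?_⟩
  · have hμA := h (by rw [bernoulliRFS_apply_image_some s ν hA, hνA, mul_zero])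
    rw [bernoulliRFS_apply_image_some r μ hA] at hμA
    exact (mul_eq_zero.1 hμA).resolve_left (by simpa using hr)
  · exact Measure.AbsolutelyContinuous.add_left
      (((Measure.absolutelyContinuous_smul (by simpa using hs1)).add_right _).smul_left _)
      ((((h.map measurable_option_some).smul_right (by simpa using hs0)).add_right' _).smul_left _)

lemma ae_bernoulliRFS_of {p : Option E → Prop} (hp : MeasurableSet {o | p o}) (hnone : p none)
    (hsome : ∀ᵐ x ∂μ, p (some x)) : ∀ᵐ o ∂bernoulliRFS r μ, p o := by
  rw [bernoulliRFS, ae_add_measure_iff]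
  exact ⟨Measure.ae_smul_measure ((ae_dirac_iff hp).2 hnone) _,
    Measure.ae_smul_measure ((ae_map_iff measurable_option_some.aemeasurable hp).2 hsome) _⟩

lemma integrable_bernoulliRFS_iff (hr : 0 < r) {φ : Option E → ℝ} (hφ : Measurable φ) :
    Integrable φ (bernoulliRFS r μ) ↔ Integrable (φ ∘ Option.some) μ := by
  rw [bernoulliRFS, integrable_add_measure,
    integrable_smul_measure (c := ENNReal.ofReal r) (by simpa using hr) ENNReal.ofReal_ne_top,
    integrable_map_measure hφ.aestronglyMeasurable measurable_option_some.aemeasurable]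
  exact and_iff_right ((integrable_dirac_of_measurable hφ none).smul_measure ENNReal.ofReal_ne_top)

lemma integral_bernoulliRFS (hr0 : 0 ≤ r) (hr1 : r ≤ 1) {φ : Option E → ℝ} (hφ : Measurable φ)
    (hint : Integrable (φ ∘ Option.some) μ) :
    ∫ o, φ o ∂bernoulliRFS r μ = (1 - r) * φ none + r * ∫ x, φ (some x) ∂μ := by
  have hint_map : Integrable φ (μ.map Option.some) :=
    (integrable_map_measure hφ.aestronglyMeasurable measurable_option_some.aemeasurable).2 hint
  rw [bernoulliRFS, integral_add_measure
      ((integrable_dirac_of_measurable hφ none).smul_measure ENNReal.ofReal_ne_top)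
      (hint_map.smul_measure ENNReal.ofReal_ne_top),
    integral_smul_measure, integral_smul_measure, integral_dirac' _ _ hφ.stronglyMeasurable,
    integral_map measurable_option_some.aemeasurable hφ.aestronglyMeasurable,
    ENNReal.toReal_ofReal (by linarith), ENNReal.toReal_ofReal hr0, smul_eq_mul, smul_eq_mul]

noncomputable def bernoulliDensity (r s : ℝ) (f : E → ℝ≥0∞) (o : Option E) : ℝ≥0∞ :=
  o.elim (ENNReal.ofReal ((1 - r) / (1 - s))) fun x => ENNReal.ofReal (r / s) * f x

lemma measurable_bernoulliDensity {f : E → ℝ≥0∞} (hf : Measurable f) :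
    Measurable (bernoulliDensity r s f) :=
  measurable_of_measurable_comp_some (hf.const_mul _)

lemma bernoulliRFS_eq_withDensity (hs0 : 0 < s) (hs1 : s < 1) {f : E → ℝ≥0∞}
    (hf : Measurable f) (hμ : ν.withDensity f = μ) :
    bernoulliRFS r μ = (bernoulliRFS s ν).withDensity (bernoulliDensity r s f) := by
  have hd := measurable_bernoulliDensity (r := r) (s := s) hf
  rw [bernoulliRFS, bernoulliRFS, withDensity_add_measure, withDensity_smul_measure,
    withDensity_smul_measure, dirac_withDensity' hd,
    withDensity_map measurable_option_some hd]
  change _ = _ • (_ • _) + _ • (ν.withDensity (ENNReal.ofReal (r / s) • f)).map Option.some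
  rw [withDensity_smul _ hf, hμ, Measure.map_smul, smul_smul, smul_smul, bernoulliDensity,
    Option.elim_none, ← ENNReal.ofReal_mul (by linarith), ← ENNReal.ofReal_mul hs0.le,
    mul_div_cancel₀ _ (by linarith), mul_div_cancel₀ _ hs0.ne']

lemma rnDeriv_bernoulliRFS (hs0 : 0 < s) (hs1 : s < 1) [IsFiniteMeasure μ] [IsFiniteMeasure ν]
    (hμν : μ ≪ ν) :
    (bernoulliRFS r μ).rnDeriv (bernoulliRFS s ν) =ᵐ[bernoulliRFS s ν]
      bernoulliDensity r s (μ.rnDeriv ν) := by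
  rw [bernoulliRFS_eq_withDensity hs0 hs1 (Measure.measurable_rnDeriv μ ν)
    (Measure.withDensity_rnDeriv_eq μ ν hμν)]
  exact Measure.rnDeriv_withDensity _ (measurable_bernoulliDensity (Measure.measurable_rnDeriv μ ν))

noncomputable def bernoulliLLR (r s : ℝ) (μ ν : Measure E) (o : Option E) : ℝ :=
  o.elim (Real.log ((1 - r) / (1 - s))) fun x => Real.log (r / s) + llr μ ν x

lemma measurable_bernoulliLLR : Measurable (bernoulliLLR r s μ ν) :=
  measurable_of_measurable_comp_some ((measurable_llr μ ν).const_add _)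

lemma llr_bernoulliRFS_ae_eq (hr0 : 0 < r) (hr1 : r ≤ 1) (hs0 : 0 < s) (hs1 : s < 1)
    [IsFiniteMeasure μ] [IsFiniteMeasure ν] (hμν : μ ≪ ν) :
    llr (bernoulliRFS r μ) (bernoulliRFS s ν) =ᵐ[bernoulliRFS r μ] bernoulliLLR r s μ ν := by
  have hlog : Measurable fun o => Real.log (bernoulliDensity r s (μ.rnDeriv ν) o).toReal :=
    Real.measurable_log.comp
      (measurable_bernoulliDensity (Measure.measurable_rnDeriv μ ν)).ennreal_toReal
  have hdensity := ae_bernoulliRFS_of (r := r)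
    (measurableSet_eq_fun hlog (measurable_bernoulliLLR (r := r) (s := s)))
    (by simp [bernoulliDensity, bernoulliLLR, ENNReal.toReal_ofReal
      (div_nonneg (by linarith : 0 ≤ 1 - r) (by linarith : 0 ≤ 1 - s))])
    (by
      filter_upwards [Measure.rnDeriv_pos hμν, hμν.ae_le (Measure.rnDeriv_lt_top μ ν)]
        with x hpos hlt
      simp only [bernoulliDensity, bernoulliLLR, Option.elim_some, ENNReal.toReal_mul,
        ENNReal.toReal_ofReal (div_pos hr0 hs0).le, llr]
      exact Real.log_mul (div_pos hr0 hs0).ne' (ENNReal.toReal_pos hpos.ne' hlt.ne).ne')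
  filter_upwards [((bernoulliRFS_absolutelyContinuous_iff hr0 hs0 hs1).2 hμν).ae_le
    (rnDeriv_bernoulliRFS hs0 hs1 hμν), hdensity] with o hrn hψo
  rw [llr, hrn, hψo]

lemma integrable_llr_bernoulliRFS_iff (hr0 : 0 < r) (hr1 : r ≤ 1) (hs0 : 0 < s) (hs1 : s < 1)
    [IsFiniteMeasure μ] [IsFiniteMeasure ν] (hμν : μ ≪ ν) :
    Integrable (llr (bernoulliRFS r μ) (bernoulliRFS s ν)) (bernoulliRFS r μ) ↔
      Integrable (llr μ ν) μ := by
  rw [integrable_congr (llr_bernoulliRFS_ae_eq hr0 hr1 hs0 hs1 hμν),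
    integrable_bernoulliRFS_iff hr0 measurable_bernoulliLLR]
  exact integrable_const_add_iff

lemma integral_llr_bernoulliRFS (hr0 : 0 < r) (hr1 : r ≤ 1) (hs0 : 0 < s) (hs1 : s < 1)
    [IsProbabilityMeasure μ] [IsFiniteMeasure ν] (hμν : μ ≪ ν) (hint : Integrable (llr μ ν) μ) :
    ∫ o, llr (bernoulliRFS r μ) (bernoulliRFS s ν) o ∂bernoulliRFS r μ =
      binaryKL r s + r * ∫ x, llr μ ν x ∂μ := by
  rw [integral_congr_ae (llr_bernoulliRFS_ae_eq hr0 hr1 hs0 hs1 hμν),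
    integral_bernoulliRFS hr0.le hr1 measurable_bernoulliLLR ((integrable_const _).add hint)]
  simp only [bernoulliLLR, Option.elim_none, Option.elim_some]
  rw [integral_add (integrable_const _) hint, integral_const, probReal_univ, one_smul, binaryKL]
  ring

end Bernoulli

section KLDivergence

variable {E : Type*} [MeasurableSpace E] {μ ν : Measure E} {r s : ℝ}

lemma klDiv_of_absolutelyContinuous (h : μ ≪ ν) :
    klDiv μ ν = ENNReal.ofReal (∫ x, llr μ ν x ∂μ) :=
  if_pos h

lemma klDiv_of_not_absolutelyContinuous (h : ¬μ ≪ ν) : klDiv μ ν = ⊤ :=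
  if_neg h

lemma klDiv_bernoulliRFS_of_integrable (hr0 : 0 < r) (hr1 : r ≤ 1) (hs0 : 0 < s) (hs1 : s < 1)
    [IsProbabilityMeasure μ] [IsFiniteMeasure ν] (hμν : μ ≪ ν) (hint : Integrable (llr μ ν) μ) :
    klDiv (bernoulliRFS r μ) (bernoulliRFS s ν) =
      ENNReal.ofReal (binaryKL r s + r * ∫ x, llr μ ν x ∂μ) := by
  rw [klDiv_of_absolutelyContinuous ((bernoulliRFS_absolutelyContinuous_iff hr0 hs0 hs1).2 hμν),
    integral_llr_bernoulliRFS hr0 hr1 hs0 hs1 hμν hint]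

lemma klDiv_bernoulliRFS_of_not_integrable (hr0 : 0 < r) (hr1 : r ≤ 1) (hs0 : 0 < s)
    (hs1 : s < 1) [IsFiniteMeasure μ] [IsFiniteMeasure ν] (hμν : μ ≪ ν)
    (hint : ¬Integrable (llr μ ν) μ) :
    klDiv (bernoulliRFS r μ) (bernoulliRFS s ν) = 0 := by
  rw [klDiv_of_absolutelyContinuous ((bernoulliRFS_absolutelyContinuous_iff hr0 hs0 hs1).2 hμν),
    integral_undef (mt (integrable_llr_bernoulliRFS_iff hr0 hr1 hs0 hs1 hμν).1 hint),
    ENNReal.ofReal_zero]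

theorem klDiv_bernoulliRFS_self (hr0 : 0 < r) (hr1 : r < 1) [IsProbabilityMeasure μ]
    [IsFiniteMeasure ν] :
    klDiv (bernoulliRFS r μ) (bernoulliRFS r ν) = ENNReal.ofReal r * klDiv μ ν := by
  by_cases hμν : μ ≪ ν
  · rw [klDiv_of_absolutelyContinuous hμν]
    by_cases hint : Integrable (llr μ ν) μ
    · rw [klDiv_bernoulliRFS_of_integrable hr0 hr1.le hr0 hr1 hμν hint, binaryKL_self, zero_add,
        ENNReal.ofReal_mul hr0.le]
    · rw [klDiv_bernoulliRFS_of_not_integrable hr0 hr1.le hr0 hr1 hμν hint, integral_undef hint,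
        ENNReal.ofReal_zero, mul_zero]
  · rw [klDiv_of_not_absolutelyContinuous hμν, ENNReal.mul_top (by simpa using hr0),
      klDiv_of_not_absolutelyContinuous
        (mt (bernoulliRFS_absolutelyContinuous_iff hr0 hr0 hr1).1 hμν)]

theorem ofReal_mul_klDiv_le_klDiv_bernoulliRFS (hr0 : 0 < r) (hr1 : r < 1) (hs0 : 0 < s)
    (hs1 : s < 1) [IsProbabilityMeasure μ] [IsFiniteMeasure ν] :
    ENNReal.ofReal r * klDiv μ ν ≤ klDiv (bernoulliRFS r μ) (bernoulliRFS s ν) := by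
  by_cases hac : bernoulliRFS r μ ≪ bernoulliRFS s ν
  · have hμν := (bernoulliRFS_absolutelyContinuous_iff hr0 hs0 hs1).1 hac
    rw [klDiv_of_absolutelyContinuous hμν]
    by_cases hint : Integrable (llr μ ν) μ
    · rw [klDiv_bernoulliRFS_of_integrable hr0 hr1.le hs0 hs1 hμν hint, ← ENNReal.ofReal_mul hr0.le]
      exact ENNReal.ofReal_le_ofReal (le_add_of_nonneg_left (binaryKL_nonneg hr0 hr1 hs0 hs1))
    · rw [integral_undef hint, ENNReal.ofReal_zero, mul_zero]
      exact zero_le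
  · rw [klDiv_of_not_absolutelyContinuous hac]
    exact le_top

end KLDivergence

theorem bernoulli_mixture_klDiv_min_general
    {E : Type*} [MeasurableSpace E]
    {H : Type*} [Fintype H] (w : H → ℝ) (hw : ∀ h, 0 ≤ w h)
    (r : H → ℝ) (hr : ∀ h, r h ∈ Set.Icc (0 : ℝ) 1)
    (μ : H → Measure E) [∀ h, IsProbabilityMeasure (μ h)]
    (rbar : ℝ) (hrbar : rbar = ∑ h, w h * r h) (h0 : 0 < rbar) (h1 : rbar < 1)
    (m : Measure E)
    (hm : m = (ENNReal.ofReal rbar)⁻¹ • ∑ h, ENNReal.ofReal (w h * r h) • μ h)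
    (F : Set (Measure E)) (hFP : ∀ ν ∈ F, IsProbabilityMeasure ν)
    (νhat : Measure E) (hνhatF : νhat ∈ F)
    (hνhat : ∀ ν ∈ F, klDiv m νhat ≤ klDiv m ν) :
    ∀ s ∈ Set.Ioo (0 : ℝ) 1, ∀ ν ∈ F,
      klDiv (bernoulliRFS rbar m) (bernoulliRFS s ν) ≥
        klDiv (bernoulliRFS rbar m) (bernoulliRFS rbar νhat) := by
  have : IsProbabilityMeasure m := by
    subst hm hrbar
    exact isProbabilityMeasure_inv_smul_sum (fun h => mul_nonneg (hw h) (hr h).1) h0 μ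
  intro s hs ν hν
  have := hFP ν hν
  have := hFP νhat hνhatF
  calc klDiv (bernoulliRFS rbar m) (bernoulliRFS rbar νhat)
      = ENNReal.ofReal rbar * klDiv m νhat := klDiv_bernoulliRFS_self h0 h1
    _ ≤ ENNReal.ofReal rbar * klDiv m ν := by gcongr; exact hνhat ν hν
    _ ≤ klDiv (bernoulliRFS rbar m) (bernoulliRFS s ν) :=
      ofReal_mul_klDiv_le_klDiv_bernoulliRFS h0 h1 hs.1 hs.2

/-- The Bernoulli approximation minimizing the KL divergence from the Bernoulli mixture
`B(r̄, m)`, over existence probabilities `s ∈ (0,1)` and state densities `ν` in a family `F`,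
is obtained by taking existence probability `r̄ = Σ_h w_h r_h` and the KL projection `ν̂` of the
normalized mixture `m` onto `F`. -/
theorem bernoulli_mixture_klDiv_min
    {E : Type*} [MeasurableSpace E] [StandardBorelSpace E]
    {H : Type*} [Fintype H] (w : H → ℝ) (hw : ∀ h, 0 ≤ w h) (hw1 : ∑ h, w h = 1)
    (r : H → ℝ) (hr : ∀ h, r h ∈ Set.Icc (0 : ℝ) 1)
    (μ : H → Measure E) [∀ h, IsProbabilityMeasure (μ h)]
    (rbar : ℝ) (hrbar : rbar = ∑ h, w h * r h) (h0 : 0 < rbar) (h1 : rbar < 1)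
    (m : Measure E)
    (hm : m = (ENNReal.ofReal rbar)⁻¹ • ∑ h, ENNReal.ofReal (w h * r h) • μ h)
    (F : Set (Measure E)) (hF : F.Nonempty) (hFP : ∀ ν ∈ F, IsProbabilityMeasure ν)
    (νhat : Measure E) (hνhatF : νhat ∈ F)
    (hνhat : ∀ ν ∈ F, klDiv m νhat ≤ klDiv m ν) :
    ∀ s ∈ Set.Ioo (0 : ℝ) 1, ∀ ν ∈ F,
      klDiv (bernoulliRFS rbar m) (bernoulliRFS s ν) ≥
        klDiv (bernoulliRFS rbar m) (bernoulliRFS rbar νhat) :=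
  bernoulli_mixture_klDiv_min_general w hw r hr μ rbar hrbar h0 h1 m hm F hFP νhat hνhatF hνhat
end

section
/- Let a > 0 and b > 0. Then ∫_0^∞ Gam(x; a, b) · log(x) dx = ψ(a) − log(b), where ψ denotes the digamma function and log the natural logarithm. -/
open MeasureTheory

/-- The digamma function `ψ`, the derivative of `log ∘ Γ` on `(0, ∞)`. -/
noncomputable def digamma (x : ℝ) : ℝ := deriv (fun y => Real.log (Real.Gamma y)) x

/-- The Gamma density with shape `a > 0` and rate `b > 0`:
`Gam(x; a, b) = (b^a / Γ(a)) x^{a−1} e^{−b x}` for `x > 0`. -/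
noncomputable def gammaPdf (a b x : ℝ) : ℝ :=
  b ^ a / Real.Gamma a * x ^ (a - 1) * Real.exp (-b * x)

/-!
Differentiating `Γ(a) = ∫₀^∞ t^{a-1} e^{-t} dt` under the integral sign gives
`Γ'(a) = ∫₀^∞ t^{a-1} log t e^{-t} dt`, so `ψ(a) = Γ'(a)/Γ(a)` is the expected logarithm under
`Gam(a, 1)`. If `X ∼ Gam(a, b)` then `bX ∼ Gam(a, 1)`, and `log X = log (bX) - log b`.
-/

open Set Real

lemma abs_log_le_rpow_add_rpow_neg_div {t ε : ℝ} (ht : 0 ≤ t) (hε : 0 < ε) :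
    |log t| ≤ (t ^ ε + t ^ (-ε)) / ε := by
  have hupper : log t ≤ t ^ ε / ε := log_le_rpow_div ht hε
  have hlower : -log t ≤ t ^ (-ε) / ε := by
    rw [← log_inv, rpow_neg ht, ← inv_rpow ht]
    exact log_le_rpow_div (inv_nonneg.mpr ht) hε
  have h₁ : 0 ≤ t ^ ε / ε := div_nonneg (rpow_nonneg ht _) hε.le
  have h₂ : 0 ≤ t ^ (-ε) / ε := div_nonneg (rpow_nonneg ht _) hε.le
  rw [add_div]
  exact abs_le.mpr ⟨by linarith, by linarith⟩

/-- For `0 < ε < a`, the bound `|log t| ≤ (t^ε + t^{-ε}) / ε` dominates the integrand by two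
convergent Gamma integrands. -/
lemma integrableOn_rpow_mul_log_mul_exp_neg {a : ℝ} (ha : 0 < a) :
    IntegrableOn (fun t => t ^ (a - 1) * (log t * exp (-t))) (Ioi 0) := by
  obtain ⟨ε, hε, hεa⟩ : ∃ ε, 0 < ε ∧ ε < a := ⟨a / 2, half_pos ha, half_lt_self ha⟩
  have hdom : IntegrableOn
      (fun t => ε⁻¹ * (exp (-t) * t ^ (a + ε - 1) + exp (-t) * t ^ (a - ε - 1))) (Ioi 0) :=
    ((GammaIntegral_convergent (by linarith)).add
      (GammaIntegral_convergent (by linarith))).const_mul _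
  refine hdom.mono' (by fun_prop : Measurable _).aestronglyMeasurable ?_
  filter_upwards [ae_restrict_mem measurableSet_Ioi] with t (ht : 0 < t)
  have hplus : t ^ (a + ε - 1) = t ^ (a - 1) * t ^ ε := by rw [← rpow_add ht]; ring_nf
  have hminus : t ^ (a - ε - 1) = t ^ (a - 1) * t ^ (-ε) := by rw [← rpow_add ht]; ring_nf
  calc ‖t ^ (a - 1) * (log t * exp (-t))‖ = t ^ (a - 1) * |log t| * exp (-t) := by
        rw [norm_mul, norm_mul, norm_of_nonneg (rpow_nonneg ht.le _),
          norm_of_nonneg (exp_nonneg _), norm_eq_abs, mul_assoc]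
    _ ≤ t ^ (a - 1) * ((t ^ ε + t ^ (-ε)) / ε) * exp (-t) := by
        gcongr
        exact abs_log_le_rpow_add_rpow_neg_div ht.le hε
    _ = _ := by rw [hplus, hminus]; field_simp

lemma hasDerivAt_Gamma_eq_integral {a : ℝ} (ha : 0 < a) :
    HasDerivAt Gamma (∫ t in Ioi 0, t ^ (a - 1) * (log t * exp (-t))) a := by
  have hℂ := Complex.hasDerivAt_GammaIntegral (s := a) (by simpa using ha)
  have hcast : ∫ t in Ioi (0 : ℝ), (t : ℂ) ^ ((a : ℂ) - 1) * (log t * exp (-t)) =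
      ((∫ t in Ioi 0, t ^ (a - 1) * (log t * exp (-t)) : ℝ) : ℂ) := by
    rw [← integral_complex_ofReal]
    refine setIntegral_congr_fun measurableSet_Ioi fun t (ht : 0 < t) => ?_
    push_cast [Complex.ofReal_cpow ht.le]
    rfl
  rw [hcast] at hℂ
  have hℝ := hℂ.real_of_complex
  rw [Complex.ofReal_re] at hℝ
  refine hℝ.congr_of_eventuallyEq ?_
  filter_upwards [Ioi_mem_nhds ha] with x hx
  rw [Complex.GammaIntegral_ofReal, Complex.ofReal_re, Gamma_eq_integral hx]

lemma gammaPdf_eq_mul_gammaPdf_one {a b x : ℝ} (hb : 0 < b) (hx : 0 ≤ x) :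
    gammaPdf a b x = b * gammaPdf a 1 (b * x) := by
  simp only [gammaPdf, one_rpow, neg_mul, one_mul, mul_rpow hb.le hx, rpow_sub_one hb.ne']
  field_simp

lemma integral_gammaPdf {a b : ℝ} (ha : 0 < a) (hb : 0 < b) :
    ∫ x in Ioi 0, gammaPdf a b x = 1 := by
  have hΓ : 0 < Gamma a := Gamma_pos_of_pos ha
  simp only [gammaPdf, mul_assoc, integral_const_mul, neg_mul,
    integral_rpow_mul_exp_neg_mul_Ioi ha hb, one_div, inv_rpow hb.le]
  field_simp

lemma integral_gammaPdf_one_mul_log {a : ℝ} (ha : 0 < a) :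
    ∫ t in Ioi 0, gammaPdf a 1 t * log t = digamma a := by
  have hΓ : 0 < Gamma a := Gamma_pos_of_pos ha
  rw [digamma, ((hasDerivAt_Gamma_eq_integral ha).log hΓ.ne').deriv, div_eq_inv_mul,
    ← integral_const_mul]
  refine setIntegral_congr_fun measurableSet_Ioi fun t _ => ?_
  simp only [gammaPdf, one_rpow, neg_mul, one_mul]
  ring

lemma integrableOn_gammaPdf_one_mul_log {a : ℝ} (ha : 0 < a) :
    IntegrableOn (fun t => gammaPdf a 1 t * log t) (Ioi 0) := by
  refine IntegrableOn.congr_fun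
    ((integrableOn_rpow_mul_log_mul_exp_neg ha).const_mul (Gamma a)⁻¹) (fun t _ => ?_)
    measurableSet_Ioi
  simp only [gammaPdf, one_rpow, neg_mul, one_mul]
  ring

lemma integral_gammaPdf_mul_eq_integral_gammaPdf_one_mul (g : ℝ → ℝ) {a b : ℝ} (hb : 0 < b) :
    ∫ x in Ioi 0, gammaPdf a b x * g x = ∫ t in Ioi 0, gammaPdf a 1 t * g (t / b) := by
  calc ∫ x in Ioi 0, gammaPdf a b x * g x
      = ∫ x in Ioi 0, b * (gammaPdf a 1 (b * x) * g (b * x / b)) :=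
        setIntegral_congr_fun measurableSet_Ioi fun x (hx : 0 < x) => by
          rw [gammaPdf_eq_mul_gammaPdf_one hb hx.le, mul_div_cancel_left₀ _ hb.ne', mul_assoc]
    _ = _ := by
        rw [integral_const_mul,
          integral_comp_mul_left_Ioi (fun t => gammaPdf a 1 t * g (t / b)) 0 hb, mul_zero,
          smul_eq_mul, mul_inv_cancel_left₀ hb.ne']

/-- The expected logarithm under a Gamma density:
`∫_0^∞ Gam(x; a, b) log(x) dx = ψ(a) − log(b)`. -/
theorem gamma_expected_log (a b : ℝ) (ha : 0 < a) (hb : 0 < b) :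
    ∫ x in Set.Ioi (0 : ℝ), gammaPdf a b x * Real.log x = digamma a - Real.log b := by
  have hpdf : ∫ t in Ioi 0, gammaPdf a 1 t = 1 := integral_gammaPdf ha one_pos
  have hpdf_int : IntegrableOn (gammaPdf a 1) (Ioi 0) :=
    Integrable.of_integral_ne_zero (by rw [hpdf]; exact one_ne_zero)
  have hlog : ∀ t ∈ Ioi (0 : ℝ),
      gammaPdf a 1 t * log (t / b) = gammaPdf a 1 t * log t - log b * gammaPdf a 1 t :=
    fun t ht => by rw [log_div (ne_of_gt ht) hb.ne']; ring
  rw [integral_gammaPdf_mul_eq_integral_gammaPdf_one_mul _ hb,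
    setIntegral_congr_fun measurableSet_Ioi hlog,
    integral_sub (integrableOn_gammaPdf_one_mul_log ha) (hpdf_int.const_mul _),
    integral_const_mul, integral_gammaPdf_one_mul_log ha, hpdf, mul_one]
end

section
/- Let p be a probability measure on (0, ∞) such that L = ∫ log(x) dp(x) and M = ∫ x dp(x) are finite, with M > 0. Define the Gamma cross entropy C(a, b) = −(a·log(b) − log Γ(a) + (a − 1)·L − b·M) for a, b > 0. Suppose a* > 0 and b* > 0 satisfy the moment-matching conditions ψ(a*) − log(b*) = L and a*/b* = M, where ψ is the digamma function. Then for all a, b > 0, C(a, b) ≥ C(a*, b*). That is, matching the expected value and the expected logarithm yields the global minimizer of the cross entropy −∫ log Gam(x; a, b) dp(x) over all Gamma densities. -/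
/-!
The log-normalizer `log ∫₀^∞ x^(a-1) e^(-b x) dx = log Γ(a) - a log b` of the Gamma family is
jointly convex in `(a, b)`: the integrand is the exponential of a function affine in `(a, b)`, so
Hölder's inequality bounds the integral at a convex combination of parameters by the geometric
mean of the integrals. The cross entropy is this log-normalizer plus an affine function of
`(a, b)`, and the moment-matching conditions say precisely that its derivative at `(a*, b*)`
vanishes in every direction; a convex function lies above its tangent, so `(a*, b*)` is a global
minimizer.
-/

open MeasureTheory

open Set Real
open scoped ENNReal

theorem ConvexOn.le_sub_of_hasDerivAt_lineMap {E : Type*} [AddCommGroup E] [Module ℝ E]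
    {s : Set E} {f : E → ℝ} (hf : ConvexOn ℝ s f) {x y : E} (hx : x ∈ s) (hy : y ∈ s)
    {f' : ℝ}
    (hf' : HasDerivAt (fun t : ℝ => f (AffineMap.lineMap x y t)) f' 0) :
    f' ≤ f y - f x := by
  have hline : ConvexOn ℝ (AffineMap.lineMap x y ⁻¹' s)
      (fun t : ℝ => f (AffineMap.lineMap x y t)) :=
    hf.comp_affineMap _
  have h := hline.le_slope_of_hasDerivAt (x := (0 : ℝ)) (y := 1) (by simpa using hx)
    (by simpa using hy) zero_lt_one hf'
  simpa [slope_def_field] using h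

noncomputable def gammaLogNormalizer (z : ℝ × ℝ) : ℝ := log (Gamma z.1) - z.1 * log z.2

/-- The Gamma integrand `x ^ (a - 1) * exp (-(b * x))` (for `x > 0`), written as the exponential
of a function affine in `z = (a, b)`. -/
noncomputable def gammaKernel (z : ℝ × ℝ) (x : ℝ) : ℝ≥0∞ :=
  ENNReal.ofReal (exp ((z.1 - 1) * log x - z.2 * x))

theorem measurable_gammaKernel (z : ℝ × ℝ) : Measurable (gammaKernel z) := by
  unfold gammaKernel
  fun_prop

theorem gammaKernel_add_smul {s t : ℝ} (hst : s + t = 1) (z w : ℝ × ℝ) (x : ℝ) :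
    gammaKernel (s • z + t • w) x = gammaKernel z x ^ s * gammaKernel w x ^ t := by
  simp only [gammaKernel, ENNReal.ofReal_rpow_of_pos (exp_pos _), ← exp_mul,
    ← ENNReal.ofReal_mul (exp_pos _).le, ← exp_add, Prod.fst_add, Prod.snd_add, Prod.smul_fst,
    Prod.smul_snd, smul_eq_mul]
  congr 2
  linear_combination log x * hst

theorem lintegral_gammaKernel {z : ℝ × ℝ} (hz : z ∈ Ioi 0 ×ˢ Ioi 0) :
    ∫⁻ x in Ioi 0, gammaKernel z x = ENNReal.ofReal (exp (gammaLogNormalizer z)) := by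
  obtain ⟨a, b⟩ := z
  obtain ⟨ha, hb⟩ : 0 < a ∧ 0 < b := hz
  have hint : IntegrableOn (fun x => x ^ (a - 1) * exp (-(b * x))) (Ioi 0) := by
    simpa [rpow_one] using integrableOn_rpow_mul_exp_neg_mul_rpow (by linarith) one_pos hb
  have hnormalizer :
      exp (gammaLogNormalizer (a, b)) = ∫ x in Ioi 0, x ^ (a - 1) * exp (-(b * x)) := by
    rw [integral_rpow_mul_exp_neg_mul_Ioi ha hb, gammaLogNormalizer, exp_sub, exp_log
      (Gamma_pos_of_pos ha), mul_comm, exp_mul, exp_log hb, div_rpow zero_le_one hb.le, one_rpow]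
    ring
  rw [hnormalizer, ofReal_integral_eq_lintegral_ofReal hint
    ((ae_restrict_iff' measurableSet_Ioi).mpr (ae_of_all _ fun x (hx : 0 < x) => by positivity))]
  refine setLIntegral_congr_fun measurableSet_Ioi fun x (hx : 0 < x) => ?_
  rw [gammaKernel, rpow_def_of_pos hx, ← exp_add]
  ring_nf

theorem convexOn_gammaLogNormalizer : ConvexOn ℝ (Ioi 0 ×ˢ Ioi 0) gammaLogNormalizer := by
  refine ⟨(convex_Ioi 0).prod (convex_Ioi 0), fun z hz w hw s t hs ht hst => ?_⟩
  have hmem : s • z + t • w ∈ Ioi (0 : ℝ) ×ˢ Ioi 0 :=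
    (convex_Ioi 0).prod (convex_Ioi 0) hz hw hs ht hst
  have holder := ENNReal.lintegral_mul_norm_pow_le (μ := volume.restrict (Ioi 0))
    (measurable_gammaKernel z).aemeasurable (measurable_gammaKernel w).aemeasurable hs ht hst
  simp only [← gammaKernel_add_smul hst] at holder
  rw [lintegral_gammaKernel hmem, lintegral_gammaKernel hz, lintegral_gammaKernel hw,
    ENNReal.ofReal_rpow_of_pos (exp_pos _), ENNReal.ofReal_rpow_of_pos (exp_pos _),
    ← ENNReal.ofReal_mul (by positivity), ENNReal.ofReal_le_ofReal_iff (by positivity),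
    ← exp_mul, ← exp_mul, ← exp_add, exp_le_exp] at holder
  simp only [smul_eq_mul]
  linarith

theorem hasDerivAt_log_Gamma {a : ℝ} (ha : 0 < a) :
    HasDerivAt (fun y => log (Gamma y)) (digamma a) a := by
  refine (DifferentiableAt.log (differentiableAt_Gamma fun m => ?_)
    (Gamma_pos_of_pos ha).ne').hasDerivAt
  have : (0 : ℝ) ≤ m := m.cast_nonneg
  linarith

theorem hasDerivAt_gammaLogNormalizer_lineMap {z : ℝ × ℝ} (hz : z ∈ Ioi 0 ×ˢ Ioi 0)
    (w : ℝ × ℝ) :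
    HasDerivAt (fun t : ℝ => gammaLogNormalizer (AffineMap.lineMap z w t))
      ((digamma z.1 - log z.2) * (w.1 - z.1) - z.1 / z.2 * (w.2 - z.2)) 0 := by
  obtain ⟨ha, hb⟩ : 0 < z.1 ∧ 0 < z.2 := hz
  have hline : ∀ c d : ℝ, HasDerivAt (fun t : ℝ => t * (d - c) + c) (d - c) 0 := fun c d => by
    simpa using ((hasDerivAt_id (0 : ℝ)).mul_const (d - c)).add_const c
  have hlogGamma := (hasDerivAt_log_Gamma ha).comp_of_eq (0 : ℝ) (hline z.1 w.1) (by simp)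
  have hlog := (hline z.2 w.2).log (by simpa using hb.ne')
  have hprod := (hline z.1 w.1).mul hlog
  show HasDerivAt (fun t => log (Gamma (t * (w.1 - z.1) + z.1))
    - (t * (w.1 - z.1) + z.1) * log (t * (w.2 - z.2) + z.2)) _ 0
  refine (hlogGamma.sub hprod).congr_deriv ?_
  simp only [zero_mul, zero_add]
  field_simp
  ring

theorem gamma_cross_entropy_min_moment_matching_general
    (L M : ℝ)
    (C : ℝ → ℝ → ℝ)
    (hC : ∀ a b, C a b = -(a * Real.log b - Real.log (Real.Gamma a) + (a - 1) * L - b * M))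
    (astar bstar : ℝ) (hastar : 0 < astar) (hbstar : 0 < bstar)
    (hmatch₁ : digamma astar - Real.log bstar = L) (hmatch₂ : astar / bstar = M) :
    ∀ a b : ℝ, 0 < a → 0 < b → C astar bstar ≤ C a b := by
  intro a b ha hb
  have hstar : (astar, bstar) ∈ Ioi (0 : ℝ) ×ˢ Ioi 0 := ⟨hastar, hbstar⟩
  have htangent := convexOn_gammaLogNormalizer.le_sub_of_hasDerivAt_lineMap hstar
    (show (a, b) ∈ Ioi (0 : ℝ) ×ˢ Ioi 0 from ⟨ha, hb⟩)
    (hasDerivAt_gammaLogNormalizer_lineMap hstar (a, b))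
  simp only [gammaLogNormalizer, hmatch₁, hmatch₂] at htangent
  rw [hC, hC]
  linarith

/-- For a probability measure `p` supported on `(0, ∞)` with finite log-moment `L` and finite
mean `M > 0`, the Gamma cross entropy `C(a, b) = −(a log b − log Γ(a) + (a − 1) L − b M)` is
globally minimized over `a, b > 0` at any `(a*, b*)` satisfying the moment-matching conditions
`ψ(a*) − log(b*) = L` and `a*/b* = M`. -/
theorem gamma_cross_entropy_min_moment_matching
    (p : Measure ℝ) [IsProbabilityMeasure p] (hsupp : p (Set.Iic 0) = 0)
    (L M : ℝ)
    (hLint : Integrable (fun x => Real.log x) p) (hL : L = ∫ x, Real.log x ∂p)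
    (hMint : Integrable (fun x => x) p) (hM : M = ∫ x, x ∂p) (hMpos : 0 < M)
    (C : ℝ → ℝ → ℝ)
    (hC : ∀ a b, C a b = -(a * Real.log b - Real.log (Real.Gamma a) + (a - 1) * L - b * M))
    (astar bstar : ℝ) (hastar : 0 < astar) (hbstar : 0 < bstar)
    (hmatch₁ : digamma astar - Real.log bstar = L) (hmatch₂ : astar / bstar = M) :
    ∀ a b : ℝ, 0 < a → 0 < b → C astar bstar ≤ C a b :=
  gamma_cross_entropy_min_moment_matching_general L M C hC astar bstar hastar hbstar hmatch₁ hmatch₂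
end
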